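/- Initialization: for every closed λ-term t, the read-back of the crumbling of t is t itself: ↓⌊t⌋ = t (up to α-equivalence). -/

import Mathlib

/-- λ-terms -/
inductive Tm where
  | var : ℕ → Tm
  | lam : ℕ → Tm → Tm
  | app : Tm → Tm → Tm
deriving DecidableEq

def Tm.fv : Tm → Finset ℕ
  | .var x => {x}
  | .lam x t => t.fv.erase x
  | .app t u => t.fv ∪ u.fv

def Tm.isValue : Tm → Prop
  | .var _ => True
  | .lam _ _ => True
  | .app _ _ => False

def Tm.subst : Tm → ℕ → Tm → Tm
  | .var x, z, s => if x = z then s else .var x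
  | .lam x t, z, s => if x = z then .lam x t else .lam x (t.subst z s)
  | .app t u, z, s => .app (t.subst z s) (u.subst z s)

def Tm.size : Tm → ℕ
  | .var _ => 1
  | .lam _ t => t.size + 1
  | .app t u => t.size + u.size + 1

/-- Right v-contexts: R ::= ⟨·⟩ | t R | R v -/
inductive RCtx where
  | hole : RCtx
  | appL : Tm → RCtx → RCtx
  | appR : RCtx → Tm → RCtx

def RCtx.wf : RCtx → Prop
  | .hole => True
  | .appL _ R => R.wf
  | .appR R v => R.wf ∧ v.isValue

def RCtx.plug : RCtx → Tm → Tm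
  | .hole, t => t
  | .appL u R, t => .app u (R.plug t)
  | .appR R v, t => .app (R.plug t) v

def RCtx.comp : RCtx → RCtx → RCtx
  | .hole, R' => R'
  | .appL u R, R' => .appL u (R.comp R')
  | .appR R v, R' => .appR (R.comp R') v

/-- weak call-by-value reduction -/
def BetaV (t u : Tm) : Prop :=
  ∃ R : RCtx, R.wf ∧ ∃ x body v, Tm.isValue v ∧
    t = R.plug (.app (.lam x body) v) ∧ u = R.plug (body.subst x v)

/-- general one-hole contexts -/
inductive PCtx where
  | hole : PCtx
  | lam : ℕ → PCtx → PCtx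
  | appL : PCtx → Tm → PCtx
  | appR : Tm → PCtx → PCtx

def PCtx.plug : PCtx → Tm → Tm
  | .hole, t => t
  | .lam x C, t => .lam x (C.plug t)
  | .appL C u, t => .app (C.plug t) u
  | .appR u C, t => .app u (C.plug t)

/-- a one-hole context is a right v-context -/
def PCtx.isRight : PCtx → Prop
  | .hole => True
  | .lam _ _ => False
  | .appL C u => C.isRight ∧ u.isValue
  | .appR _ C => C.isRight

/-- `HS t z C` : C is the result of replacing the (unique) occurrence of z in t by a hole -/
inductive HS : Tm → ℕ → PCtx → Prop
  | var {z} : HS (.var z) z .hole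
  | lam {x z t C} : x ≠ z → HS t z C → HS (.lam x t) z (.lam x C)
  | appL {z t u C} : HS t z C → z ∉ u.fv → HS (.app t u) z (.appL C u)
  | appR {z t u C} : z ∉ t.fv → HS u z C → HS (.app t u) z (.appR t C)

-- Crumbled syntax: bites and environments.  The binder `none` stands for `*`. 
mutual
inductive Bite where
  | app : ℕ → ℕ → Bite
  | lamVar : ℕ → ℕ → Bite      -- λx.[*←y]
  | lam : ℕ → Env → Bite       -- λx.E
inductive Env where
  | nil : Env
  | cons : Env → Option ℕ → Bite → Env   -- E[x←b]
end

def Env.append : Env → Env → Env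
  | E, .nil => E
  | E, .cons E' x b => .cons (E.append E') x b

mutual
def Bite.fv : Bite → Finset ℕ
  | .app x y => {x, y}
  | .lamVar x y => ({y} : Finset ℕ) \ {x}
  | .lam x E => E.fv.erase x
def Env.fv : Env → Finset ℕ
  | .nil => ∅
  | .cons E (some z) b => (E.fv.erase z) ∪ b.fv
  | .cons E none b => E.fv ∪ b.fv
end

mutual
def Bite.bv : Bite → Finset ℕ
  | .app _ _ => ∅
  | .lamVar x _ => {x}
  | .lam x E => insert x E.bv
def Env.bv : Env → Finset ℕ
  | .nil => ∅
  | .cons E _ b => E.bv ∪ b.bv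
end

def Env.domList : Env → List (Option ℕ)
  | .nil => []
  | .cons E z _ => z :: E.domList

def Bite.isVal : Bite → Prop
  | .app _ _ => False
  | _ => True

/-- every entry maps a variable to a crumbled value -/
def Env.IsVEnv : Env → Prop
  | .nil => True
  | .cons E _ b => E.IsVEnv ∧ b.isVal

/-- a crumble: nonempty environment whose leftmost entry binds `*` -/
def Env.IsCrumble : Env → Prop
  | .nil => False
  | .cons .nil z _ => z = none
  | .cons E _ _ => E.IsCrumble

def Env.lookup : Env → ℕ → Option Bite
  | .nil, _ => none
  | .cons E (some y) b, x => if y = x then some b else E.lookup x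
  | .cons E none _, x => E.lookup x

-- substitution of a variable for a variable, leaving domains untouched 
mutual
def Bite.rename : Bite → ℕ → ℕ → Bite
  | .app a b, z, y => .app (if a = z then y else a) (if b = z then y else b)
  | .lamVar x w, z, y =>
      if x = z then .lamVar x w else .lamVar x (if w = z then y else w)
  | .lam x E, z, y => if x = z then .lam x E else .lam x (E.rename z y)
def Env.rename : Env → ℕ → ℕ → Env
  | .nil, _, _ => .nil
  | .cons E x b, z, y => .cons (E.rename z y) x (b.rename z y)
end

/-- replace the binder of the leftmost entry -/
def Env.setHead : Env → Option ℕ → Env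
  | .nil, _ => .nil
  | .cons .nil _ b, z => .cons .nil z b
  | .cons E x b, z => .cons (E.setHead z) x b

def Env.len : Env → ℕ
  | .nil => 0
  | .cons E _ _ => E.len + 1

mutual
def Bite.size : Bite → ℕ
  | .app _ _ => 2
  | .lamVar _ _ => 2
  | .lam _ E => E.size + 1
def Env.size : Env → ℕ
  | .nil => 0
  | .cons E _ b => E.size + b.size
end

/-- reduction of the finest crumbled calculus -/
inductive Step : Env → Env → Prop
  | m1 {E Ev : Env} {z : Option ℕ} {x y x₁ : ℕ} {Eb : Env} :
      Ev.IsVEnv → Ev.lookup x = some (.lam x₁ Eb) → Eb.IsCrumble →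
      Step ((E.cons z (.app x y)).append Ev)
           ((E.append ((Eb.rename x₁ y).setHead z)).append Ev)
  | m2 {E Ev : Env} {z : Option ℕ} {x y x₁ y₁ : ℕ} {v : Bite} :
      Ev.IsVEnv → Ev.lookup x = some (.lamVar x₁ y₁) →
      Ev.lookup (if y₁ = x₁ then y else y₁) = some v →
      Step ((E.cons z (.app x y)).append Ev) ((E.cons z v).append Ev)

def maxVar : Tm → ℕ
  | .var x => x
  | .lam x t => max x (maxVar t)
  | .app t u => max (maxVar t) (maxVar u)

/-- the finest crumbling translation, with a counter supplying fresh variables -/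
def crumbA : Tm → ℕ → Env × ℕ
  | .var x, n => (.cons .nil none (.app x x), n)
  | .lam x (.var y), n => (.cons .nil none (.lamVar x y), n)
  | .lam x t, n =>
      let p := crumbA t n
      (.cons .nil none (.lam x p.1), p.2)
  | .app (.var x) (.var y), n => (.cons .nil none (.app x y), n)
  | .app u (.var y), n =>
      let p := crumbA u n
      ((Env.cons .nil none (.app p.2 y)).append (p.1.setHead (some p.2)), p.2 + 1)
  | .app (.var x) u', n =>
      let p := crumbA u' n
      ((Env.cons .nil none (.app x p.2)).append (p.1.setHead (some p.2)), p.2 + 1)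
  | .app u u', n =>
      let p := crumbA u n
      let q := crumbA u' p.2
      (((Env.cons .nil none (.app q.2 (q.2 + 1))).append
          (p.1.setHead (some q.2))).append (q.1.setHead (some (q.2 + 1))),
       q.2 + 2)

def crumb (t : Tm) : Env := (crumbA t (maxVar t + 1)).1

-- read-back of bites and environments 
mutual
def Bite.rb : Bite → Tm
  | .app x y => .app (.var x) (.var y)
  | .lamVar x y => .lam x (.var y)
  | .lam x E => .lam x (Env.rb E)
def Env.rb : Env → Tm
  | .nil => .var 0
  | .cons .nil _ b => Bite.rb b
  | .cons E (some z) b => (Env.rb E).subst z (Bite.rb b)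
  | .cons (.cons E w b') none b => Env.rb (.cons E w b')
end

/-- the parallel substitution σ_{E_v} applied to a term -/
def Env.applySigma : Env → Tm → Tm
  | .nil, t => t
  | .cons E (some x) b, t => (E.applySigma t).subst x (Bite.rb b)
  | .cons E none _, t => E.applySigma t

/-- σ applied to the non-hole parts of a right v-context -/
def Env.applySigmaR : Env → RCtx → RCtx
  | _, .hole => .hole
  | Ev, .appL u R => .appL (Ev.applySigma u) (Ev.applySigmaR R)
  | Ev, .appR R v => .appR (Ev.applySigmaR R) (Ev.applySigma v)

def Env.WellNamed (E : Env) : Prop :=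
  E.domList.Nodup ∧
  (∀ x : ℕ, some x ∈ E.domList → x ∉ E.bv) ∧
  (∀ (E₁ : Env) (z : Option ℕ) (b : Bite) (E₂ : Env),
     E = (E₁.cons z b).append E₂ →
     ∀ v : ℕ, z = some v → v ∉ b.fv ∧ v ∉ E₂.fv)

/-- lookup returning the read-back of the bound value, defaulting to the variable -/
def Env.lookTm (E : Env) (x : ℕ) : Tm :=
  match E.lookup x with
  | some b => b.rb
  | none => .var x

/-- RCAM: history entries and states -/
inductive HEntry where
  | unit : HEntry
  | pair : ℕ → ℕ → HEntry

abbrev MState := Env × Env × List HEntry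

inductive FStep : MState → MState → Prop
  | sea {E₁ Ev : Env} {H : List HEntry} {x : Option ℕ} {v : Bite} :
      v.isVal →
      FStep (E₁.cons x v, Ev, H) (E₁, (Env.cons .nil x v).append Ev, .unit :: H)
  | m1 {E₁ Ev : Env} {H : List HEntry} {z : Option ℕ} {x y x₁ : ℕ} {Eb : Env} :
      Ev.IsVEnv → Ev.lookup x = some (.lam x₁ Eb) → Eb.IsCrumble →
      FStep (E₁.cons z (.app x y), Ev, H)
            (E₁.append ((Eb.rename x₁ y).setHead z), Ev, .pair x y :: H)
  | m2 {E₁ Ev : Env} {H : List HEntry} {z : Option ℕ} {x y x₁ y₁ : ℕ} {v : Bite} :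
      Ev.IsVEnv → Ev.lookup x = some (.lamVar x₁ y₁) →
      Ev.lookup (if y₁ = x₁ then y else y₁) = some v →
      FStep (E₁.cons z (.app x y), Ev, H)
            (E₁, (Env.cons .nil z v).append Ev, .pair x y :: H)

inductive BStep : MState → MState → Prop
  | sea {E₁ Ev : Env} {H : List HEntry} {x : Option ℕ} {v : Bite} :
      v.isVal →
      BStep (E₁, (Env.cons .nil x v).append Ev, .unit :: H) (E₁.cons x v, Ev, H)
  | m1 {E₁ Ev D : Env} {H : List HEntry} {z : Option ℕ} {x y x₁ : ℕ}
       {Eb : Env} {b' : Bite} :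
      Ev.IsVEnv → Ev.lookup x = some (.lam x₁ Eb) → Eb.IsCrumble →
      D.len = Eb.len - 1 →
      BStep ((E₁.cons z b').append D, Ev, .pair x y :: H)
            (E₁.cons z (.app x y), Ev, H)
  | m2 {E₁ Ev : Env} {H : List HEntry} {z : Option ℕ} {x y x₁ y₁ : ℕ} {w : Bite} :
      Ev.IsVEnv → Ev.lookup x = some (.lamVar x₁ y₁) →
      BStep (E₁, (Env.cons .nil z w).append Ev, .pair x y :: H)
            (E₁.cons z (.app x y), Ev, H)

-- AUX START
def Tm.allv : Tm → Finset ℕ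
  | .var x => {x}
  | .lam x t => insert x t.allv
  | .app t u => t.allv ∪ u.allv

lemma allv_le_maxVar : ∀ (t : Tm) (v : ℕ), v ∈ t.allv → v ≤ maxVar t
  | .var x, v, h => by simp [Tm.allv] at h; simp [maxVar, h]
  | .lam x t, v, h => by
      simp [Tm.allv] at h
      rcases h with h | h
      · simp [maxVar, h]
      · exact le_trans (allv_le_maxVar t v h) (by simp [maxVar])
  | .app t u, v, h => by
      simp [Tm.allv] at h
      rcases h with h | h
      · exact le_trans (allv_le_maxVar t v h) (by simp [maxVar])
      · exact le_trans (allv_le_maxVar u v h) (by simp [maxVar])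

lemma fv_subset_allv : ∀ (t : Tm), t.fv ⊆ t.allv
  | .var x => by simp [Tm.fv, Tm.allv]
  | .lam x t => by
      simp only [Tm.fv, Tm.allv]
      exact (Finset.erase_subset _ _).trans ((fv_subset_allv t).trans (Finset.subset_insert _ _))
  | .app t u => Finset.union_subset_union (fv_subset_allv t) (fv_subset_allv u)

lemma subst_notin : ∀ (t : Tm) (z : ℕ) (s : Tm), z ∉ t.fv → t.subst z s = t
  | .var x, z, s, h => by
      simp [Tm.fv] at h; simp [Tm.subst, Ne.symm h]
  | .lam x t, z, s, h => by
      simp [Tm.fv] at h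
      by_cases hx : x = z
      · simp [Tm.subst, hx]
      · simp [Tm.subst, hx, subst_notin t z s (h (Ne.symm hx))]
  | .app t u, z, s, h => by
      simp [Tm.fv] at h
      simp [Tm.subst, subst_notin t z s h.1, subst_notin u z s h.2]

lemma subst_subst : ∀ (t : Tm) (m z : ℕ) (s r : Tm), z ∉ t.allv → z ≠ m →
    (t.subst m s).subst z r = t.subst m (s.subst z r)
  | .var x, m, z, s, r, hz, hzm => by
      simp [Tm.allv] at hz
      by_cases hx : x = m
      · simp [Tm.subst, hx]
      · simp [Tm.subst, hx, (Ne.symm hz : x ≠ z)]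
  | .lam x t, m, z, s, r, hz, hzm => by
      simp [Tm.allv] at hz
      by_cases hx : x = m
      · have : z ∉ t.fv := fun h => hz.2 (fv_subset_allv t h)
        simp [Tm.subst, hx, Ne.symm hz.1, subst_notin t z r this]
      · simp [Tm.subst, hx, Ne.symm hz.1,
          subst_subst t m z s r hz.2 hzm]
  | .app t u, m, z, s, r, hz, hzm => by
      simp [Tm.allv] at hz
      simp [Tm.subst, subst_subst t m z s r hz.1 hzm, subst_subst u m z s r hz.2 hzm]

def Env.sdom : Env → Finset ℕ
  | .nil => ∅
  | .cons E (some z) _ => insert z E.sdom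
  | .cons E none _ => E.sdom

lemma append_ne_nil : ∀ (A B : Env), A ≠ .nil → A.append B ≠ .nil
  | A, .nil, h => h
  | A, .cons B z b, _ => by simp [Env.append]

lemma isCrumble_append : ∀ (A B : Env), A.IsCrumble → (A.append B).IsCrumble
  | A, .nil, h => h
  | A, .cons B z b, h => by
      have ih := isCrumble_append A B h
      have hne := append_ne_nil A B (by rintro rfl; exact h)
      cases hAB : A.append B with
      | nil => exact absurd hAB hne
      | cons E w c => simpa [Env.append, hAB, Env.IsCrumble] using (hAB ▸ ih)

lemma sdom_append : ∀ (A B : Env), (A.append B).sdom = A.sdom ∪ B.sdom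
  | A, .nil => by simp [Env.append, Env.sdom]
  | A, .cons B (some z) b => by
      simp [Env.append, Env.sdom, sdom_append A B, Finset.union_insert]
  | A, .cons B none b => by simp [Env.append, Env.sdom, sdom_append A B]

lemma sdom_setHead : ∀ (E : Env) (m : ℕ), E.IsCrumble →
    (E.setHead (some m)).sdom = insert m E.sdom
  | .cons .nil z b, m, h => by
      have : z = none := h
      subst this
      simp [Env.setHead, Env.sdom]
  | .cons (.cons E w c) z b, m, h => by
      have ih := sdom_setHead (.cons E w c) m h
      cases z with
      | some z => simp [Env.setHead, Env.sdom, ih, Finset.insert_comm]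
      | none => simp [Env.setHead, Env.sdom, ih]

lemma rb_append_setHead : ∀ (E : Env), E.IsCrumble →
    ∀ (A : Env) (m : ℕ), A ≠ .nil →
    (∀ z ∈ E.sdom, z ∉ (A.rb).allv ∧ z ≠ m) →
    (A.append (E.setHead (some m))).rb = (A.rb).subst m E.rb
  | .cons .nil z b, h, A, m, hA, hyp => by
      have : z = none := h
      subst this
      cases A with
      | nil => exact absurd rfl hA
      | cons A' w c => simp [Env.setHead, Env.append, Env.rb]
  | .cons (.cons E w c) zo b, h, A, m, hA, hyp => by
      have hc : Env.IsCrumble (.cons E w c) := h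
      have hAE := append_ne_nil A ((Env.cons E w c).setHead (some m)) hA
      cases zo with
      | none =>
          have ih := rb_append_setHead (.cons E w c) hc A m hA
            (fun z hz => hyp z (by simpa [Env.sdom] using hz))
          simp only [Env.setHead, Env.append]
          cases hX : (A.append ((Env.cons E w c).setHead (some m))) with
          | nil => exact absurd hX hAE
          | cons X x d =>
              rw [show Env.rb (Env.cons (Env.cons X x d) none b)
                    = Env.rb (Env.cons X x d) from rfl, ← hX, ih]
              rfl
      | some z =>
          have hz := hyp z (by simp [Env.sdom])
          have ih := rb_append_setHead (.cons E w c) hc A m hA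
            (fun z hz => hyp z (by simp [Env.sdom, hz]))
          simp only [Env.setHead, Env.append]
          cases hX : (A.append ((Env.cons E w c).setHead (some m))) with
          | nil => exact absurd hX hAE
          | cons X x d =>
              rw [show Env.rb (Env.cons (Env.cons X x d) (some z) b)
                    = (Env.rb (Env.cons X x d)).subst z b.rb from rfl, ← hX, ih,
                  subst_subst _ _ _ _ _ hz.1 hz.2]
              rfl
-- AUX END
-- MAIN START
def Tm.notVar : Tm → Prop
  | .var _ => False
  | _ => True

def Spec (t : Tm) (n : ℕ) (E : Env) (m : ℕ) : Prop :=
  E.rb = t ∧ n ≤ m ∧ E.IsCrumble ∧ ∀ z ∈ E.sdom, n ≤ z ∧ z < m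

lemma allv_lt {t : Tm} {n z : ℕ} (h : maxVar t < n) (hz : n ≤ z) : z ∉ t.allv :=
  fun hmem => absurd (allv_le_maxVar t z hmem) (by omega)

lemma fv_lt {t : Tm} {n z : ℕ} (h : maxVar t < n) (hz : n ≤ z) : z ∉ t.fv :=
  fun hmem => allv_lt h hz (fv_subset_allv t hmem)

lemma spec_app_var (u : Tm) (y n : ℕ) (E : Env) (m : ℕ)
    (hy : y < n) (hu : maxVar u < n) (h : Spec u n E m) :
    Spec (.app u (.var y)) n
      ((Env.cons .nil none (.app m y)).append (E.setHead (some m))) (m + 1) := by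
  obtain ⟨hrb, hnm, hcr, hsd⟩ := h
  have key := rb_append_setHead E hcr (Env.cons .nil none (.app m y)) m
    (by simp) (by
      intro z hz
      obtain ⟨h1, h2⟩ := hsd z hz
      constructor
      · simp [Env.rb, Bite.rb, Tm.allv]; omega
      · omega)
  refine ⟨?_, by omega, isCrumble_append _ _ (by trivial), ?_⟩
  · rw [key, hrb]
    simp [Env.rb, Bite.rb, Tm.subst]
    omega
  · intro z hz
    rw [sdom_append, sdom_setHead E m hcr] at hz
    simp [Env.sdom] at hz
    rcases hz with rfl | hz
    · omega
    · obtain ⟨h1, h2⟩ := hsd z hz; omega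

lemma spec_var_app (x : ℕ) (u : Tm) (n : ℕ) (E : Env) (m : ℕ)
    (hx : x < n) (hu : maxVar u < n) (h : Spec u n E m) :
    Spec (.app (.var x) u) n
      ((Env.cons .nil none (.app x m)).append (E.setHead (some m))) (m + 1) := by
  obtain ⟨hrb, hnm, hcr, hsd⟩ := h
  have key := rb_append_setHead E hcr (Env.cons .nil none (.app x m)) m
    (by simp) (by
      intro z hz
      obtain ⟨h1, h2⟩ := hsd z hz
      constructor
      · simp [Env.rb, Bite.rb, Tm.allv]; omega
      · omega)
  refine ⟨?_, by omega, isCrumble_append _ _ (by trivial), ?_⟩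
  · rw [key, hrb]
    simp [Env.rb, Bite.rb, Tm.subst]
    omega
  · intro z hz
    rw [sdom_append, sdom_setHead E m hcr] at hz
    simp [Env.sdom] at hz
    rcases hz with rfl | hz
    · omega
    · obtain ⟨h1, h2⟩ := hsd z hz; omega

lemma spec_app_app (u u' : Tm) (n : ℕ) (E1 E2 : Env) (m1 m2 : ℕ)
    (hu : maxVar u < n) (hu' : maxVar u' < n)
    (h1 : Spec u n E1 m1) (h2 : Spec u' m1 E2 m2) :
    Spec (.app u u') n
      (((Env.cons .nil none (.app m2 (m2 + 1))).append
          (E1.setHead (some m2))).append (E2.setHead (some (m2 + 1)))) (m2 + 2) := by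
  obtain ⟨hrb1, hnm1, hcr1, hsd1⟩ := h1
  obtain ⟨hrb2, hnm2, hcr2, hsd2⟩ := h2
  have key1 := rb_append_setHead E1 hcr1 (Env.cons .nil none (.app m2 (m2 + 1))) m2
    (by simp) (by
      intro z hz
      obtain ⟨ha, hb⟩ := hsd1 z hz
      constructor
      · simp [Env.rb, Bite.rb, Tm.allv]; omega
      · omega)
  set A1 : Env := (Env.cons .nil none (.app m2 (m2 + 1))).append (E1.setHead (some m2))
    with hA1
  have hA1rb : A1.rb = .app u (.var (m2 + 1)) := by
    rw [hA1, key1, hrb1]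
    simp [Env.rb, Bite.rb, Tm.subst]
  have hA1ne : A1 ≠ .nil := append_ne_nil _ _ (by simp)
  have key2 := rb_append_setHead E2 hcr2 A1 (m2 + 1) hA1ne
    (by
      intro z hz
      obtain ⟨ha, hb⟩ := hsd2 z hz
      refine ⟨?_, by omega⟩
      rw [hA1rb]
      simp [Tm.allv]
      refine ⟨by omega, allv_lt hu (by omega)⟩)
  refine ⟨?_, by omega, isCrumble_append _ _ (isCrumble_append _ _ (by trivial)), ?_⟩
  · rw [key2, hA1rb, hrb2]
    simp [Tm.subst, subst_notin u (m2 + 1) u' (fv_lt hu (by omega))]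
  · intro z hz
    rw [sdom_append, sdom_setHead E2 (m2 + 1) hcr2, hA1, sdom_append,
      sdom_setHead E1 m2 hcr1] at hz
    rcases Finset.mem_union.1 hz with h' | h'
    · rcases Finset.mem_union.1 h' with h'' | h''
      · simp [Env.sdom] at h''
      · rcases Finset.mem_insert.1 h'' with rfl | h3
        · omega
        · obtain ⟨ha, hb⟩ := hsd1 z h3; omega
    · rcases Finset.mem_insert.1 h' with rfl | h3
      · omega
      · obtain ⟨ha, hb⟩ := hsd2 z h3; omega

lemma crumbA_spec : ∀ (t : Tm) (n : ℕ), maxVar t < n → t.notVar →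
    Spec t n (crumbA t n).1 (crumbA t n).2
  | .var x, n, _, hv => absurd hv (by simp [Tm.notVar])
  | .lam x (.var y), n, hn, _ => by
      refine ⟨rfl, le_refl n, rfl, ?_⟩
      simp [crumbA, Env.sdom]
  | .lam x (.lam a b), n, hn, _ => by
      simp only [maxVar] at hn
      have ih := crumbA_spec (.lam a b) n (by simp [maxVar]; omega) trivial
      obtain ⟨hrb, hnm, _, _⟩ := ih
      refine ⟨?_, ?_, rfl, ?_⟩
      · simp only [crumbA, Env.rb, Bite.rb, hrb]
      · simpa [crumbA] using hnm
      · simp [crumbA, Env.sdom]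
  | .lam x (.app a b), n, hn, _ => by
      simp only [maxVar] at hn
      have ih := crumbA_spec (.app a b) n (by simp [maxVar]; omega) trivial
      obtain ⟨hrb, hnm, _, _⟩ := ih
      refine ⟨?_, ?_, rfl, ?_⟩
      · simp only [crumbA, Env.rb, Bite.rb, hrb]
      · simpa [crumbA] using hnm
      · simp [crumbA, Env.sdom]
  | .app (.var x) (.var y), n, hn, _ => by
      refine ⟨rfl, le_refl n, rfl, ?_⟩
      simp [crumbA, Env.sdom]
  | .app (.lam a b) (.var y), n, hn, _ => by
      simp only [maxVar] at hn
      have ih := crumbA_spec (.lam a b) n (by simp [maxVar]; omega) trivial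
      have := spec_app_var (.lam a b) y n _ _ (by omega) (by simp [maxVar]; omega) ih
      simpa [crumbA] using this
  | .app (.app a b) (.var y), n, hn, _ => by
      simp only [maxVar] at hn
      have ih := crumbA_spec (.app a b) n (by simp [maxVar]; omega) trivial
      have := spec_app_var (.app a b) y n _ _ (by omega) (by simp [maxVar]; omega) ih
      simpa [crumbA] using this
  | .app (.var x) (.lam a b), n, hn, _ => by
      simp only [maxVar] at hn
      have ih := crumbA_spec (.lam a b) n (by simp [maxVar]; omega) trivial
      have := spec_var_app x (.lam a b) n _ _ (by omega) (by simp [maxVar]; omega) ih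
      simpa [crumbA] using this
  | .app (.var x) (.app a b), n, hn, _ => by
      simp only [maxVar] at hn
      have ih := crumbA_spec (.app a b) n (by simp [maxVar]; omega) trivial
      have := spec_var_app x (.app a b) n _ _ (by omega) (by simp [maxVar]; omega) ih
      simpa [crumbA] using this
  | .app (.lam a b) (.lam c d), n, hn, _ => by
      simp only [maxVar] at hn
      have ih1 := crumbA_spec (.lam a b) n (by simp [maxVar]; omega) trivial
      have ih2 := crumbA_spec (.lam c d) (crumbA (.lam a b) n).2
        (by have := ih1.2.1; simp [maxVar]; omega) trivial
      have := spec_app_app (.lam a b) (.lam c d) n _ _ _ _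
        (by simp [maxVar]; omega) (by simp [maxVar]; omega) ih1 ih2
      simpa [crumbA] using this
  | .app (.lam a b) (.app c d), n, hn, _ => by
      simp only [maxVar] at hn
      have ih1 := crumbA_spec (.lam a b) n (by simp [maxVar]; omega) trivial
      have ih2 := crumbA_spec (.app c d) (crumbA (.lam a b) n).2
        (by have := ih1.2.1; simp [maxVar]; omega) trivial
      have := spec_app_app (.lam a b) (.app c d) n _ _ _ _
        (by simp [maxVar]; omega) (by simp [maxVar]; omega) ih1 ih2
      simpa [crumbA] using this
  | .app (.app a b) (.lam c d), n, hn, _ => by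
      simp only [maxVar] at hn
      have ih1 := crumbA_spec (.app a b) n (by simp [maxVar]; omega) trivial
      have ih2 := crumbA_spec (.lam c d) (crumbA (.app a b) n).2
        (by have := ih1.2.1; simp [maxVar]; omega) trivial
      have := spec_app_app (.app a b) (.lam c d) n _ _ _ _
        (by simp [maxVar]; omega) (by simp [maxVar]; omega) ih1 ih2
      simpa [crumbA] using this
  | .app (.app a b) (.app c d), n, hn, _ => by
      simp only [maxVar] at hn
      have ih1 := crumbA_spec (.app a b) n (by simp [maxVar]; omega) trivial
      have ih2 := crumbA_spec (.app c d) (crumbA (.app a b) n).2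
        (by have := ih1.2.1; simp [maxVar]; omega) trivial
      have := spec_app_app (.app a b) (.app c d) n _ _ _ _
        (by simp [maxVar]; omega) (by simp [maxVar]; omega) ih1 ih2
      simpa [crumbA] using this
termination_by t n => t.size
decreasing_by all_goals (simp [Tm.size]; try omega)
-- MAIN END

/-- initialization, ↓⌊t⌋ = t for closed t. -/
theorem initialization (t : Tm) (hclosed : t.fv = ∅) :
    (crumb t).rb = t := by
  have hnv : t.notVar := by
    cases t with
    | var x => simp [Tm.fv] at hclosed
    | lam => trivial
    | app => trivial
  simpa [crumb] using (crumbA_spec t (maxVar t + 1) (by omega) hnv).1
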